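/- Let f : ℝ → ℝ be twice continuously differentiable on [a - σ/2, a + σ/2] where σ > 0. Then ∫_{a}^{a+σ/2} f(t) dt = (σ/4)(3 f(a) - f(a - σ/2)) + R, where |R| ≤ (5σ³/96) · sup_{t ∈ [a-σ/2, a+σ/2]} |f''(t)|. -/

import Mathlib

/-!
Let `M` be the supremum of `|f''|` on the interval and `h = σ / 2`. Taylor's theorem with the
Lagrange remainder, expanded about the interior point `a`, gives
`|f x - f a - f' a (x - a)| ≤ M (x - a)² / 2`. The rule `σ/4 (3 f a - f (a - h))` integrates the
linear part `f a + f' a (t - a)` over `[a, a + h]` exactly, so its error is the integral of the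
remainder over `[a, a + h]` (at most `M h³ / 6`) plus `h / 2` times the remainder at `a - h`
(at most `M h² / 2`), in total `5 M h³ / 12 = 5 M σ³ / 96`.
-/

open intervalIntegral Set

theorem bddAbove_image_abs_iteratedDeriv_Icc {f : ℝ → ℝ} {c d : ℝ} {n : ℕ}
    (hf : ContDiffOn ℝ n f (Icc c d)) :
    BddAbove ((fun t ↦ |iteratedDeriv n f t|) '' Icc c d) := by
  rcases lt_or_ge c d with hcd | hdc
  · have hcont : ContinuousOn (fun t ↦ |iteratedDerivWithin n f (Icc c d) t|) (Icc c d) :=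
      (hf.continuousOn_iteratedDerivWithin le_rfl (uniqueDiffOn_Icc hcd)).abs
    -- `iteratedDeriv` need not be the one-sided derivative at the endpoints,
    -- so these two values are bounded separately.
    refine ((isCompact_Icc.image_of_continuousOn hcont).bddAbove.union
      ((Set.toFinite {c, d}).image (fun t ↦ |iteratedDeriv n f t|)).bddAbove).mono ?_
    rintro _ ⟨t, ht, rfl⟩
    rcases eq_endpoints_or_mem_Ioo_of_mem_Icc ht with rfl | rfl | hto
    · exact Or.inr ⟨t, by simp, rfl⟩
    · exact Or.inr ⟨t, by simp, rfl⟩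
    · refine Or.inl ⟨t, ht, ?_⟩
      dsimp only
      rw [iteratedDerivWithin_eq_iteratedDeriv (uniqueDiffOn_Icc hcd)
        (hf.contDiffAt (Icc_mem_nhds hto.1 hto.2)) ht]
  · exact ((Set.subsingleton_Icc_of_ge hdc).image _).finite.bddAbove

theorem abs_iteratedDeriv_le_iSup_Icc {f : ℝ → ℝ} {c d t : ℝ} {n : ℕ}
    (hf : ContDiffOn ℝ n f (Icc c d)) (ht : t ∈ Icc c d) :
    |iteratedDeriv n f t| ≤ ⨆ s ∈ Icc c d, |iteratedDeriv n f s| := by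
  refine le_ciSup₂ (f := fun s (_ : s ∈ Icc c d) ↦ |iteratedDeriv n f s|) ?_ t ht
  refine (bddAbove_image_abs_iteratedDeriv_Icc hf).mono ?_
  simp only [iUnion_subset_iff, range_subset_iff]
  exact fun s hs ↦ mem_image_of_mem _ hs

theorem exists_taylor_one_lagrange_Icc {f : ℝ → ℝ} {c d a x : ℝ}
    (hf : ContDiffOn ℝ 2 f (Icc c d)) (ha : a ∈ Ioo c d) (hx : x ∈ Icc c d) :
    ∃ ξ ∈ Icc c d, f x = f a + deriv f a * (x - a) + iteratedDeriv 2 f ξ * (x - a) ^ 2 / 2 := by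
  rcases eq_or_ne a x with rfl | hax
  · exact ⟨a, Ioo_subset_Icc_self ha, by ring⟩
  have hsub : uIcc a x ⊆ Icc c d := uIcc_subset_Icc (Ioo_subset_Icc_self ha) hx
  obtain ⟨ξ, hξ, hrem⟩ := taylor_mean_remainder_lagrange_iteratedDeriv (n := 1) hax (hf.mono hsub)
  have hderiv : derivWithin f (uIcc a x) a = deriv f a :=
    ((hf.contDiffAt (Icc_mem_nhds ha.1 ha.2)).differentiableAt two_ne_zero).derivWithin
      (uniqueDiffOn_uIcc hax a left_mem_uIcc)
  refine ⟨ξ, hsub (Ioo_subset_Icc_self hξ), ?_⟩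
  norm_num [taylorWithinEval_succ, hderiv] at hrem
  linarith

theorem abs_sub_taylor_one_le {f : ℝ → ℝ} {c d a x : ℝ}
    (hf : ContDiffOn ℝ 2 f (Icc c d)) (ha : a ∈ Ioo c d) (hx : x ∈ Icc c d) :
    |f x - (f a + deriv f a * (x - a))| ≤
      (⨆ t ∈ Icc c d, |iteratedDeriv 2 f t|) / 2 * (x - a) ^ 2 := by
  obtain ⟨ξ, hξ, hfx⟩ := exists_taylor_one_lagrange_Icc hf ha hx
  calc |f x - (f a + deriv f a * (x - a))| = |iteratedDeriv 2 f ξ| / 2 * (x - a) ^ 2 := by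
        rw [hfx, add_sub_cancel_left, abs_div, abs_mul, abs_two, abs_of_nonneg (sq_nonneg (x - a))]
        ring
    _ ≤ _ := by gcongr; exact abs_iteratedDeriv_le_iSup_Icc hf hξ

theorem abs_integral_sub_taylor_one_le {f : ℝ → ℝ} {c d a b : ℝ}
    (hf : ContDiffOn ℝ 2 f (Icc c d)) (ha : a ∈ Ioo c d) (hab : a ≤ b) (hbd : b ≤ d) :
    |(∫ t in a..b, f t) - ((b - a) * f a + (b - a) ^ 2 / 2 * deriv f a)| ≤
      (⨆ t ∈ Icc c d, |iteratedDeriv 2 f t|) / 6 * (b - a) ^ 3 := by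
  set M := ⨆ t ∈ Icc c d, |iteratedDeriv 2 f t|
  have hsub : Icc a b ⊆ Icc c d := Icc_subset_Icc ha.1.le hbd
  have hlin : (∫ t in a..b, (f a + deriv f a * (t - a))) =
      (b - a) * f a + (b - a) ^ 2 / 2 * deriv f a := by
    rw [integral_add intervalIntegrable_const
      ((by fun_prop : Continuous fun t ↦ deriv f a * (t - a)).intervalIntegrable a b),
      integral_const, integral_const_mul, integral_comp_sub_right (fun t ↦ t)]
    norm_num
    ring
  have hquad : (∫ t in a..b, M / 2 * (t - a) ^ 2) = M / 6 * (b - a) ^ 3 := by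
    rw [integral_const_mul, integral_comp_sub_right (· ^ 2)]
    norm_num [integral_pow]
    ring
  rw [← hlin, ← integral_sub ((hf.continuousOn.mono hsub).intervalIntegrable_of_Icc hab)
    ((by fun_prop : Continuous fun t ↦ f a + deriv f a * (t - a)).intervalIntegrable a b),
    ← hquad, ← Real.norm_eq_abs]
  refine norm_integral_le_of_norm_le hab (Filter.Eventually.of_forall fun t ht ↦ ?_) ?_
  · exact abs_sub_taylor_one_le hf ha (hsub (Ioc_subset_Icc_self ht))
  · exact (by fun_prop : Continuous fun t ↦ M / 2 * (t - a) ^ 2).intervalIntegrable a b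

theorem stmt_4 (σ a : ℝ) (f : ℝ → ℝ) (hσ : 0 < σ)
    (hf : ContDiffOn ℝ 2 f (Icc (a - σ / 2) (a + σ / 2))) :
    ∃ R : ℝ,
      (∫ t in a..(a + σ / 2), f t) = σ / 4 * (3 * f a - f (a - σ / 2)) + R ∧
      |R| ≤ 5 * σ ^ 3 / 96 * ⨆ t ∈ Icc (a - σ / 2) (a + σ / 2), |iteratedDeriv 2 f t| := by
  set M := ⨆ t ∈ Icc (a - σ / 2) (a + σ / 2), |iteratedDeriv 2 f t|
  have ha : a ∈ Ioo (a - σ / 2) (a + σ / 2) := ⟨by linarith, by linarith⟩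
  have hback := abs_sub_taylor_one_le hf ha (x := a - σ / 2) ⟨le_rfl, by linarith⟩
  have hint := abs_integral_sub_taylor_one_le hf ha (b := a + σ / 2) (by linarith) le_rfl
  rw [sub_sub_cancel_left, neg_sq] at hback
  rw [add_sub_cancel_left] at hint
  refine ⟨_, (add_sub_cancel _ _).symm, ?_⟩
  calc |(∫ t in a..(a + σ / 2), f t) - σ / 4 * (3 * f a - f (a - σ / 2))|
      = |((∫ t in a..(a + σ / 2), f t) - (σ / 2 * f a + (σ / 2) ^ 2 / 2 * deriv f a)) +
          σ / 4 * (f (a - σ / 2) - (f a + deriv f a * -(σ / 2)))| := by ring_nf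
    _ ≤ M / 6 * (σ / 2) ^ 3 + σ / 4 * (M / 2 * (σ / 2) ^ 2) := by
        refine (abs_add_le _ _).trans (add_le_add hint ?_)
        rw [abs_mul, abs_of_pos (by positivity : 0 < σ / 4)]
        gcongr
    _ = 5 * σ ^ 3 / 96 * M := by ring
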